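/- arXiv:2308.16363 — 4 statements merged into one kernel-verified Lean document; each statement's English description precedes it below -/
import Mathlib

section
/- In a CD neighborhood graph, for any two vertices s, t distinct from v: if some shortest directed path from s to t passes through v as an interior vertex, then there is exactly one shortest directed path from s to t, i.e. σ(s,t) = 1. -/
open Finset

variable {V : Type*}

/-- `l` is a directed path from `s` to `t` in the directed graph with adjacency
relation `adj`: consecutive vertices are joined by edges, it starts at `s`,
ends at `t`, and has no repeated vertices. -/
def IsDirPath (adj : V → V → Prop) (s t : V) (l : List V) : Prop :=
  l.Chain' adj ∧ l.head? = some s ∧ l.getLast? = some t ∧ l.Nodup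

/-- `l` is a shortest directed path from `s` to `t`. -/
def IsShortestDirPath (adj : V → V → Prop) (s t : V) (l : List V) : Prop :=
  IsDirPath adj s t l ∧ ∀ l', IsDirPath adj s t l' → l.length ≤ l'.length

/-- `x` occurs as an interior vertex of the list `l` (i.e. `x` is a member of `l`
which is neither the first nor the last entry). -/
def ListInterior (l : List V) (x : V) : Prop := x ∈ l.tail.dropLast

/-- `σ(s,t)`: the number of shortest directed paths from `s` to `t`. -/
noncomputable def numShortest (adj : V → V → Prop) (s t : V) : ℕ :=
  {l : List V | IsShortestDirPath adj s t l}.ncard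

/-- `σ(s,t∣x)`: the number of shortest directed paths from `s` to `t` that pass
through `x` as an interior vertex. -/
noncomputable def numShortestThrough (adj : V → V → Prop) (s t x : V) : ℕ :=
  {l : List V | IsShortestDirPath adj s t l ∧ ListInterior l x}.ncard

/-- A CD Index neighborhood graph: a directed graph whose vertex set is the
disjoint union `{v} ∪ I ∪ J ∪ K ∪ T` of the focal vertex `v` and four pairwise
disjoint finite sets, with the edge structure of the CD Index neighborhood. -/
structure CDGraph (V : Type*) where
  /-- the adjacency relation: `adj u w` means there is a directed edge `u → w` -/
  adj : V → V → Prop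
  /-- the focal vertex -/
  v : V
  /-- the set of `I`-type vertices -/
  I : Finset V
  /-- the set of `J`-type vertices -/
  J : Finset V
  /-- the set of `K`-type vertices -/
  K : Finset V
  /-- the set of vertices cited by `v` -/
  T : Finset V
  v_not_I : v ∉ I
  v_not_J : v ∉ J
  v_not_K : v ∉ K
  v_not_T : v ∉ T
  disj_IJ : Disjoint I J
  disj_IK : Disjoint I K
  disj_IT : Disjoint I T
  disj_JK : Disjoint J K
  disj_JT : Disjoint J T
  disj_KT : Disjoint K T
  /-- every vertex is `v` or belongs to one of `I`, `J`, `K`, `T` -/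
  cover : ∀ x : V, x = v ∨ x ∈ I ∨ x ∈ J ∨ x ∈ K ∨ x ∈ T
  /-- `v` has an out-edge to each element of `T` and no other out-edges -/
  v_out : ∀ w, adj v w ↔ w ∈ T
  /-- each `i ∈ I` has exactly one out-edge, namely to `v` -/
  I_out : ∀ i ∈ I, ∀ w, adj i w ↔ w = v
  /-- each `j ∈ J` has an out-edge to `v` -/
  J_cites_v : ∀ j ∈ J, adj j v
  /-- each `j ∈ J` has at least one out-edge into `T` -/
  J_cites_T : ∀ j ∈ J, ∃ t ∈ T, adj j t
  /-- every out-edge of `j ∈ J` goes to `{v} ∪ T` -/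
  J_out : ∀ j ∈ J, ∀ w, adj j w → w = v ∨ w ∈ T
  /-- each `k ∈ K` has at least one out-edge -/
  K_cites : ∀ k ∈ K, ∃ w, adj k w
  /-- every out-edge of `k ∈ K` goes into `T` -/
  K_out : ∀ k ∈ K, ∀ w, adj k w → w ∈ T
  /-- vertices in `T` have no out-edges -/
  T_out : ∀ t ∈ T, ∀ w, ¬ adj t w

/-- The out-degree of a vertex `u`: the number of out-neighbors of `u`. -/
noncomputable def CDGraph.degout (G : CDGraph V) (u : V) : ℕ :=
  {w | G.adj u w}.ncard

/-- The in-degree of the focal vertex `v`, namely `n_I + n_J`. -/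
def CDGraph.degin (G : CDGraph V) : ℕ := G.I.card + G.J.card

/-- The raw betweenness of the focal vertex `v`:
`B(v) = Σ_{s ≠ v} Σ_{t ≠ v} σ(s,t∣v)/σ(s,t)`, where terms with `σ(s,t) = 0`
count as `0` (division by zero in `ℝ` yields `0`). -/
noncomputable def CDGraph.B [Fintype V] [DecidableEq V] (G : CDGraph V) : ℝ :=
  ∑ s ∈ univ.erase G.v, ∑ t ∈ univ.erase G.v,
    (numShortestThrough G.adj s t G.v : ℝ) / (numShortest G.adj s t : ℝ)

/-!
Every edge of a CD neighborhood graph ends in `v` or in `T`, and vertices of `T` have no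
out-edges, so the middle vertex of any two consecutive edges is `v`. Hence a directed path has
at most three vertices, and one with exactly three is `[s, v, t]`. A shortest path through `v`
has three vertices, so all shortest paths do, and they all equal `[s, v, t]`.
-/

section MiddleVertex

variable {adj : V → V → Prop} {x : V}

theorem length_le_three_of_isChain_of_nodup (hmid : ∀ a b c, adj a b → adj b c → b = x)
    {l : List V} (hchain : l.IsChain adj) (hnodup : l.Nodup) : l.length ≤ 3 := by
  match l, hchain, hnodup with
  | [], _, _ | [_], _, _ | [_, _], _, _ | [_, _, _], _, _ => simp
  | a :: b :: c :: d :: _, hchain, hnodup =>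
    simp only [List.isChain_cons_cons] at hchain
    obtain ⟨hab, hbc, hcd, -⟩ := hchain
    have hbc_ne : b ≠ c := by
      simp only [List.nodup_cons, List.mem_cons] at hnodup
      exact fun h => hnodup.2.1 (Or.inl h)
    exact absurd ((hmid a b c hab hbc).trans (hmid b c d hbc hcd).symm) hbc_ne

theorem IsDirPath.eq_of_length_eq_three (hmid : ∀ a b c, adj a b → adj b c → b = x)
    {s t : V} {l : List V} (hl : IsDirPath adj s t l) (h3 : l.length = 3) : l = [s, x, t] := by
  obtain ⟨a, b, c, rfl⟩ : ∃ a b c, l = [a, b, c] := by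
    match l, h3 with
    | [a, b, c], _ => exact ⟨a, b, c, rfl⟩
  obtain ⟨hchain, hhead, hlast, -⟩ := hl
  have hchain : [a, b, c].IsChain adj := hchain
  simp only [List.isChain_cons_cons] at hchain
  have ha : a = s := by simpa using hhead
  have hc : c = t := by simpa [List.getLast?] using hlast
  rw [ha, hmid a b c hchain.1 hchain.2.1, hc]

theorem IsShortestDirPath.length_eq {s t : V} {l l' : List V}
    (hl : IsShortestDirPath adj s t l) (hl' : IsShortestDirPath adj s t l') :
    l.length = l'.length :=
  le_antisymm (hl.2 l' hl'.1) (hl'.2 l hl.1)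

theorem ListInterior.three_le_length {l : List V} (h : ListInterior l x) : 3 ≤ l.length := by
  have hpos := List.length_pos_of_mem h
  rw [List.length_dropLast, List.length_tail] at hpos
  omega

theorem numShortest_eq_one_of_listInterior (hmid : ∀ a b c, adj a b → adj b c → b = x)
    {s t : V} (h : ∃ l, IsShortestDirPath adj s t l ∧ ListInterior l x) :
    numShortest adj s t = 1 := by
  obtain ⟨l, hl, hint⟩ := h
  have hlen : l.length = 3 :=
    le_antisymm (length_le_three_of_isChain_of_nodup hmid hl.1.1 hl.1.2.2.2)
      hint.three_le_length
  have hshortest : {l' | IsShortestDirPath adj s t l'} = {[s, x, t]} := by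
    ext l'
    refine ⟨fun hl' => hl'.1.eq_of_length_eq_three hmid ?_, ?_⟩
    · rw [← hl.length_eq hl', hlen]
    · rintro rfl
      rwa [← hl.1.eq_of_length_eq_three hmid hlen]
  rw [numShortest, hshortest, Set.ncard_singleton]

end MiddleVertex

namespace CDGraph

theorem eq_v_or_mem_T_of_adj (G : CDGraph V) {a b : V} (hab : G.adj a b) :
    b = G.v ∨ b ∈ G.T := by
  rcases G.cover a with rfl | ha | ha | ha | ha
  · exact Or.inr ((G.v_out b).mp hab)
  · exact Or.inl ((G.I_out a ha b).mp hab)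
  · exact G.J_out a ha b hab
  · exact Or.inr (G.K_out a ha b hab)
  · exact absurd hab (G.T_out a ha b)

theorem eq_v_of_adj_of_adj (G : CDGraph V) {a b c : V} (hab : G.adj a b) (hbc : G.adj b c) :
    b = G.v :=
  (G.eq_v_or_mem_T_of_adj hab).resolve_right fun hb => G.T_out b hb c hbc

end CDGraph

theorem cd_sigma_eq_one_general (G : CDGraph V) (s t : V)
    (h : ∃ l, IsShortestDirPath G.adj s t l ∧ ListInterior l G.v) :
    numShortest G.adj s t = 1 :=
  numShortest_eq_one_of_listInterior (fun _ _ _ => G.eq_v_of_adj_of_adj) h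

/-- In a CD neighborhood graph, for any two vertices `s, t` distinct
from `v`: if some shortest directed path from `s` to `t` passes through `v` as an
interior vertex, then there is exactly one shortest directed path from `s` to `t`,
i.e. `σ(s,t) = 1`. -/
theorem cd_sigma_eq_one [Fintype V] (G : CDGraph V) (s t : V)
    (hs : s ≠ G.v) (ht : t ≠ G.v)
    (h : ∃ l, IsShortestDirPath G.adj s t l ∧ ListInterior l G.v) :
    numShortest G.adj s t = 1 :=
  cd_sigma_eq_one_general G s t h
end

section
/- In a CD neighborhood graph, for any two vertices s, t distinct from v, the number of shortest directed paths from s to t passing through v as an interior vertex satisfies σ(s,t|v) ≤ 1. -/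
open Finset

variable {V : Type*}

/-!
Let `a → v → b` be the edges of a directed path at an interior occurrence of `v`. Since
`a → v`, the vertex `a` lies in `I ∪ J`, and no vertex has an edge into `I ∪ J`; so `a` is the
first vertex `s`. Since `v → b`, the vertex `b` lies in `T`, which has no out-edges; so `b` is
the last vertex `t`. Hence the only such path is `[s, v, t]`.
-/

namespace List

variable {α : Type*} {R : α → α → Prop}

theorem IsChain.eq_singleton_of_cons {x : α} {q : List α} (h : (x :: q).IsChain R)
    (hq : q ≠ []) (hout : ∀ b, R x b → ∀ c, ¬ R b c) : ∃ b, q = [b] := by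
  rcases q with _ | ⟨b, _ | ⟨c, q⟩⟩
  · exact absurd rfl hq
  · exact ⟨b, rfl⟩
  · simp only [isChain_cons_cons] at h
    exact absurd h.2.1 (hout b h.1 c)

theorem IsChain.eq_triple_of_mem {l : List α} {s x t : α} (h : l.IsChain R)
    (hhead : l.head? = some s) (hlast : l.getLast? = some t) (hs : s ≠ x) (ht : t ≠ x)
    (hx : x ∈ l) (hin : ∀ a, R a x → ∀ c, ¬ R c a) (hout : ∀ b, R x b → ∀ c, ¬ R b c) :
    l = [s, x, t] := by
  obtain ⟨p, q, rfl⟩ := append_of_mem hx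
  have hp : p ≠ [] := by
    rintro rfl
    exact hs (Option.some_injective _ hhead).symm
  have hq : q ≠ [] := by
    rintro rfl
    rw [getLast?_append_of_ne_nil _ (cons_ne_nil x [])] at hlast
    exact ht (Option.some_injective _ hlast).symm
  obtain ⟨b, rfl⟩ := (h.suffix (suffix_append p (x :: q))).eq_singleton_of_cons hq hout
  -- Reversal turns the in-neighbour side into an out-neighbour side for the flipped relation.
  have hpx : (x :: p.reverse).IsChain (fun a b => R b a) := by
    rw [← reverse_concat', isChain_reverse]
    exact h.prefix ⟨[b], by simp⟩
  obtain ⟨a, hpa⟩ := hpx.eq_singleton_of_cons (reverse_ne_nil_iff.2 hp) hin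
  rw [reverse_eq_cons_iff, reverse_nil, nil_append] at hpa
  subst hpa
  simp_all

end List

namespace CDGraph

variable (G : CDGraph V)

theorem mem_I_or_mem_J_of_adj_v {a : V} (h : G.adj a G.v) : a ∈ G.I ∨ a ∈ G.J := by
  rcases G.cover a with rfl | hI | hJ | hK | hT
  · exact absurd ((G.v_out _).1 h) G.v_not_T
  · exact Or.inl hI
  · exact Or.inr hJ
  · exact absurd (G.K_out _ hK _ h) G.v_not_T
  · exact absurd h (G.T_out _ hT _)

theorem not_adj_of_mem_I_or_mem_J {a : V} (ha : a ∈ G.I ∨ a ∈ G.J) (c : V) :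
    ¬ G.adj c a := by
  have hav : a ≠ G.v := by
    rintro rfl
    exact ha.elim G.v_not_I G.v_not_J
  have haT : a ∉ G.T :=
    ha.elim (fun hI => disjoint_left.1 G.disj_IT hI) (fun hJ => disjoint_left.1 G.disj_JT hJ)
  intro h
  rcases G.cover c with rfl | hI | hJ | hK | hT
  · exact haT ((G.v_out _).1 h)
  · exact hav ((G.I_out _ hI _).1 h)
  · exact (G.J_out _ hJ _ h).elim hav haT
  · exact haT (G.K_out _ hK _ h)
  · exact G.T_out _ hT _ h

theorem eq_of_isDirPath_of_listInterior {s t : V} (hs : s ≠ G.v) (ht : t ≠ G.v)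
    {l : List V} (hp : IsDirPath G.adj s t l) (hv : ListInterior l G.v) :
    l = [s, G.v, t] :=
  hp.1.eq_triple_of_mem hp.2.1 hp.2.2.1 hs ht
    ((List.dropLast_sublist _).trans (List.tail_sublist l) |>.mem hv)
    (fun _ ha => G.not_adj_of_mem_I_or_mem_J (G.mem_I_or_mem_J_of_adj_v ha))
    (fun b hb => G.T_out b ((G.v_out b).1 hb))

end CDGraph

theorem cd_sigmaThrough_le_one_general (G : CDGraph V) (s t : V)
    (hs : s ≠ G.v) (ht : t ≠ G.v) :
    numShortestThrough G.adj s t G.v ≤ 1 := by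
  have hsub : {l : List V | IsShortestDirPath G.adj s t l ∧ ListInterior l G.v}
      ⊆ {[s, G.v, t]} :=
    fun _ ⟨⟨hp, _⟩, hv⟩ => G.eq_of_isDirPath_of_listInterior hs ht hp hv
  exact (Set.ncard_le_ncard hsub).trans (Set.ncard_singleton _).le

/-- In a CD neighborhood graph, for any two vertices `s, t` distinct
from `v`, the number of shortest directed paths from `s` to `t` passing through `v`
as an interior vertex satisfies `σ(s,t∣v) ≤ 1`. -/
theorem cd_sigmaThrough_le_one [Fintype V] (G : CDGraph V) (s t : V)
    (hs : s ≠ G.v) (ht : t ≠ G.v) :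
    numShortestThrough G.adj s t G.v ≤ 1 :=
  cd_sigmaThrough_le_one_general G s t hs ht
end

section
/- In a CD neighborhood graph, for every vertex s ∈ J, the total number of shortest directed paths starting at s and passing through v as an interior vertex equals degout(v) − degout(s) + 1, where degout(s) counts the out-edge of s to v together with its out-edges into T. -/
/-!
A path from `s ∈ J` through `v` must be `s → v → t` with `t ∈ T`, because `v` only points
into `T` and `T` is a sink. Such a path is shortest exactly when there is no edge `s → t`, so
`σ(s,t∣v)` is the indicator of `t ∈ T ∖ N⁺(s)`, and the sum is
`|T| - |N⁺(s) ∩ T| = degout(v) - (degout(s) - 1)`.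
-/

open Finset

variable {V : Type*}

namespace IsDirPath

variable {adj : V → V → Prop} {s t : V} {l : List V}

lemma pair (h : adj s t) (hst : s ≠ t) : IsDirPath adj s t [s, t] :=
  ⟨List.isChain_pair.mpr h, rfl, rfl, by simpa using hst⟩

lemma adj_of_length_le_two (h : IsDirPath adj s t l) (hst : s ≠ t) (hl : l.length ≤ 2) :
    adj s t := by
  obtain ⟨hc, hh, hlast, -⟩ := h
  match l, hc, hh, hlast, hl with
  | [a], _, hh, hlast, _ =>
    simp only [List.head?_cons, List.getLast?_singleton, Option.some.injEq] at hh hlast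
    exact absurd (hh.symm.trans hlast) hst
  | [a, b], hc, hh, hlast, _ =>
    simp only [List.head?_cons, List.getLast?_cons_cons, List.getLast?_singleton,
      Option.some.injEq] at hh hlast
    subst hh hlast
    exact List.isChain_pair.mp hc

lemma isShortestDirPath_iff_of_length_eq_three (h : IsDirPath adj s t l)
    (hl : l.length = 3) : IsShortestDirPath adj s t l ↔ ¬ adj s t := by
  have hst : s ≠ t := by
    obtain ⟨-, hh, hlast, hnd⟩ := h
    match l, hh, hlast, hnd, hl with
    | [a, b, c], hh, hlast, hnd, _ =>
      simp only [List.head?_cons, List.getLast?_cons_cons, List.getLast?_singleton,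
        Option.some.injEq] at hh hlast
      subst hh hlast
      simp_all
  refine ⟨fun hmin hadj => ?_, fun hnadj => ⟨h, fun l' hl' => ?_⟩⟩
  · simpa [hl] using hmin.2 _ (pair hadj hst)
  · by_contra! hlt
    exact hnadj (hl'.adj_of_length_le_two hst (by omega))

end IsDirPath

namespace CDGraph

variable (G : CDGraph V)

lemma eq_nil_of_chain_cons_of_mem_T {t : V} (ht : t ∈ G.T) {l : List V}
    (h : (t :: l).IsChain G.adj) : l = [] := by
  rcases l with _ | ⟨w, l⟩
  · rfl
  · exact absurd (List.isChain_cons_cons.mp h).1 (G.T_out t ht w)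

lemma eq_nil_or_singleton_of_chain_cons_v {l : List V} (h : (G.v :: l).IsChain G.adj) :
    l = [] ∨ ∃ t ∈ G.T, l = [t] := by
  rcases l with _ | ⟨t, l⟩
  · exact .inl rfl
  · obtain ⟨hvt, h⟩ := List.isChain_cons_cons.mp h
    have ht := (G.v_out t).mp hvt
    exact .inr ⟨t, ht, by rw [G.eq_nil_of_chain_cons_of_mem_T ht h]⟩

lemma length_le_one_or_eq_v_t_of_chain_cons_of_mem_J {s : V} (hs : s ∈ G.J) {l : List V}
    (h : (s :: l).IsChain G.adj) : l.length ≤ 1 ∨ ∃ t ∈ G.T, l = [G.v, t] := by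
  rcases l with _ | ⟨w, l⟩
  · exact .inl (by simp)
  · obtain ⟨hsw, h⟩ := List.isChain_cons_cons.mp h
    rcases G.J_out s hs w hsw with rfl | hw
    · rcases G.eq_nil_or_singleton_of_chain_cons_v h with rfl | ⟨t, ht, rfl⟩
      exacts [.inl le_rfl, .inr ⟨t, ht, rfl⟩]
    · exact .inl (by simp [G.eq_nil_of_chain_cons_of_mem_T hw h])

lemma isDirPath_and_listInterior_v_iff {s t : V} (hs : s ∈ G.J) {l : List V} :
    IsDirPath G.adj s t l ∧ ListInterior l G.v ↔ l = [s, G.v, t] ∧ t ∈ G.T := by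
  constructor
  · rintro ⟨⟨hc, hh, hlast, -⟩, hint⟩
    obtain ⟨l, rfl⟩ : ∃ l', l = s :: l' := by
      rcases l with _ | ⟨a, l⟩ <;> simp_all
    rcases G.length_le_one_or_eq_v_t_of_chain_cons_of_mem_J hs hc with hl | ⟨t', ht', rfl⟩
    · rcases l with _ | ⟨a, _ | ⟨b, l⟩⟩ <;> simp_all [ListInterior]
    · simp only [List.getLast?_cons_cons, List.getLast?_singleton, Option.some.injEq] at hlast
      exact ⟨hlast ▸ rfl, hlast ▸ ht'⟩
  · rintro ⟨rfl, ht⟩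
    have hsv : s ≠ G.v := fun h => G.v_not_J (h ▸ hs)
    have hst : s ≠ t := fun h => G.disj_JT.forall_ne_finset hs ht h
    have hvt : G.v ≠ t := fun h => G.v_not_T (h ▸ ht)
    refine ⟨⟨?_, rfl, rfl, by simp [hsv, hst, hvt]⟩, by simp [ListInterior]⟩
    exact List.isChain_cons_cons.mpr
      ⟨G.J_cites_v s hs, List.isChain_pair.mpr ((G.v_out t).mpr ht)⟩

lemma numShortestThrough_v_of_mem_J [DecidableEq V] {s t : V} [DecidablePred (G.adj s)]
    (hs : s ∈ G.J) :
    numShortestThrough G.adj s t G.v = if t ∈ G.T.filter (¬ G.adj s ·) then 1 else 0 := by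
  have hpaths : {l | IsShortestDirPath G.adj s t l ∧ ListInterior l G.v}
      = {l | l = [s, G.v, t] ∧ t ∈ G.T.filter (¬ G.adj s ·)} := by
    ext l
    simp only [Set.mem_ofPred_eq, mem_filter, IsShortestDirPath]
    constructor
    · rintro ⟨⟨hl, hmin⟩, hint⟩
      obtain ⟨rfl, ht⟩ := (G.isDirPath_and_listInterior_v_iff hs).mp ⟨hl, hint⟩
      exact ⟨rfl, ht, (hl.isShortestDirPath_iff_of_length_eq_three rfl).mp ⟨hl, hmin⟩⟩
    · rintro ⟨rfl, ht, hnadj⟩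
      obtain ⟨hl, hint⟩ := (G.isDirPath_and_listInterior_v_iff hs).mpr ⟨rfl, ht⟩
      exact ⟨(hl.isShortestDirPath_iff_of_length_eq_three rfl).mpr hnadj, hint⟩
  rw [numShortestThrough, hpaths]
  split_ifs with h <;> simp [h]

lemma degout_v : G.degout G.v = G.T.card := by
  rw [degout, show {w | G.adj G.v w} = ↑G.T from Set.ext G.v_out, Set.ncard_coe_finset]

lemma degout_of_mem_J [DecidableEq V] {s : V} [DecidablePred (G.adj s)] (hs : s ∈ G.J) :
    G.degout s = (G.T.filter (G.adj s)).card + 1 := by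
  have hout : {w | G.adj s w} = ↑(insert G.v (G.T.filter (G.adj s))) := by
    ext w
    simp only [Set.mem_ofPred_eq, coe_insert, coe_filter, Set.mem_insert_iff]
    refine ⟨fun hw => (G.J_out s hs w hw).imp id (⟨·, hw⟩), ?_⟩
    rintro (rfl | ⟨-, hw⟩)
    exacts [G.J_cites_v s hs, hw]
  rw [degout, hout, Set.ncard_coe_finset, card_insert_of_notMem]
  exact fun h => G.v_not_T (mem_filter.mp h).1

end CDGraph

/-- In a CD neighborhood graph, for every vertex `s ∈ J`, the total
number of shortest directed paths starting at `s` and passing through `v` as an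
interior vertex equals `degout(v) − degout(s) + 1`. -/
theorem cd_paths_through_v_from_J [Fintype V] [DecidableEq V] (G : CDGraph V)
    (s : V) (hs : s ∈ G.J) :
    ((∑ t ∈ univ.erase G.v, numShortestThrough G.adj s t G.v : ℕ) : ℤ)
      = (G.degout G.v : ℤ) - (G.degout s : ℤ) + 1 := by
  classical
  have hsub : G.T.filter (¬ G.adj s ·) ⊆ univ.erase G.v := fun t ht =>
    mem_erase.mpr ⟨fun h => G.v_not_T (h ▸ (mem_filter.mp ht).1), mem_univ t⟩
  have hsum : ∑ t ∈ univ.erase G.v, numShortestThrough G.adj s t G.v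
      = (G.T.filter (¬ G.adj s ·)).card := by
    simp only [G.numShortestThrough_v_of_mem_J hs, sum_ite_mem, inter_eq_right.mpr hsub,
      sum_const, smul_eq_mul, mul_one]
  have hsplit := card_filter_add_card_filter_not (s := G.T) (G.adj s)
  rw [hsum, G.degout_v, G.degout_of_mem_J hs]
  omega
end

section
/- In a CD neighborhood graph with degout(v) ≥ 1 and degin(v) + n_K ≥ 1, the normalized betweenness B^CD(v) = B(v)/(degout(v)·(degin(v) + n_K)) satisfies B^CD(v) = degin(v)/(degin(v) + n_K) − (Σ_{j ∈ J} (degout(j) − 1)) / (degout(v)·(degin(v) + n_K)). -/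
open Finset

variable {V : Type*}

/-!
Every vertex with both an in- and an out-neighbour is `v`, so a directed path has at most three
vertices, and `v` is interior to a shortest path from `s` to `t` exactly when `s → v → t` and
there is no edge `s → t`; that path is then the only one. Hence `B(v)` counts the pairs
`(s, t) ∈ (I ∪ J) × T` with no edge `s → t`: `|T|` of them for `s ∈ I`, and
`|T| - (degout s - 1)` for `s ∈ J`.
-/

theorem isShortestDirPath_iff_of_unique {adj : V → V → Prop} {s t : V} {l₀ : List V}
    (h : ∀ l, IsDirPath adj s t l ↔ l = l₀) (l : List V) :
    IsShortestDirPath adj s t l ↔ l = l₀ := by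
  refine ⟨fun hl => (h l).1 hl.1, ?_⟩
  rintro rfl
  exact ⟨(h _).2 rfl, fun l' hl' => by rw [(h l').1 hl']⟩

namespace CDGraph

variable (G : CDGraph V)

theorem eq_v_or_mem_T_of_adj_s8 {x y : V} (h : G.adj x y) : y = G.v ∨ y ∈ G.T := by
  rcases G.cover x with rfl | hx | hx | hx | hx
  · exact Or.inr ((G.v_out y).1 h)
  · exact Or.inl ((G.I_out x hx y).1 h)
  · exact G.J_out x hx y h
  · exact Or.inr (G.K_out x hx y h)
  · exact absurd h (G.T_out x hx y)

theorem adj_v_iff {s : V} : G.adj s G.v ↔ s ∈ G.I ∨ s ∈ G.J := by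
  refine ⟨fun h => ?_, ?_⟩
  · rcases G.cover s with rfl | hs | hs | hs | hs
    · exact absurd ((G.v_out _).1 h) G.v_not_T
    · exact Or.inl hs
    · exact Or.inr hs
    · exact absurd (G.K_out s hs _ h) G.v_not_T
    · exact absurd h (G.T_out s hs _)
  · rintro (hs | hs)
    · exact (G.I_out s hs G.v).2 rfl
    · exact G.J_cites_v s hs

theorem ne_of_adj {x y : V} (h : G.adj x y) : x ≠ y := by
  rintro rfl
  rcases G.eq_v_or_mem_T_of_adj_s8 h with rfl | hT
  · exact (G.adj_v_iff.1 h).elim G.v_not_I G.v_not_J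
  · exact G.T_out x hT x h

theorem eq_v_of_adj_of_adj_s8 {x y z : V} (hxy : G.adj x y) (hyz : G.adj y z) : y = G.v :=
  (G.eq_v_or_mem_T_of_adj_s8 hxy).resolve_right fun hy => G.T_out y hy z hyz

theorem ne_of_adj_v_of_v_adj {s t : V} (hs : G.adj s G.v) (ht : G.adj G.v t) : s ≠ t := by
  rintro rfl
  exact G.T_out s ((G.v_out s).1 ht) G.v hs

theorem isDirPath_iff {s t : V} {l : List V} :
    IsDirPath G.adj s t l ↔ (l = [s] ∧ t = s) ∨ (l = [s, t] ∧ G.adj s t) ∨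
      (l = [s, G.v, t] ∧ G.adj s G.v ∧ G.adj G.v t) := by
  constructor
  · rintro ⟨hc, hh, hl, hn⟩
    replace hc : l.IsChain G.adj := hc
    match l, hh, hl with
    | [a], rfl, hl => simp_all
    | [a, b], rfl, hl => simp_all
    | [a, b, c], rfl, hl =>
      simp only [List.isChain_cons_cons, List.isChain_singleton, and_true] at hc
      obtain rfl := G.eq_v_of_adj_of_adj_s8 hc.1 hc.2
      simp_all
    | a :: b :: c :: d :: _, _, _ =>
      simp only [List.isChain_cons_cons] at hc
      have hbc : b = c :=
        (G.eq_v_of_adj_of_adj_s8 hc.1 hc.2.1).trans (G.eq_v_of_adj_of_adj_s8 hc.2.1 hc.2.2.1).symm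
      simp [hbc] at hn
  · rintro (⟨rfl, rfl⟩ | ⟨rfl, h⟩ | ⟨rfl, hs, ht⟩)
    · exact ⟨List.isChain_singleton _, rfl, rfl, List.nodup_singleton _⟩
    · exact ⟨List.isChain_pair.2 h, rfl, rfl, by simp [G.ne_of_adj h]⟩
    · refine ⟨List.isChain_cons_cons.2 ⟨hs, List.isChain_pair.2 ht⟩, rfl, rfl, ?_⟩
      simp [G.ne_of_adj hs, G.ne_of_adj ht, G.ne_of_adj_v_of_v_adj hs ht]

theorem isDirPath_iff_eq_of_not_adj {s t : V} {l : List V} (hs : G.adj s G.v)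
    (ht : G.adj G.v t) (hst : ¬ G.adj s t) : IsDirPath G.adj s t l ↔ l = [s, G.v, t] := by
  simp [G.isDirPath_iff, hs, ht, hst, (G.ne_of_adj_v_of_v_adj hs ht).symm]

theorem isShortestDirPath_and_interior_v_iff {s t : V} {l : List V} :
    IsShortestDirPath G.adj s t l ∧ ListInterior l G.v ↔
      l = [s, G.v, t] ∧ G.adj s G.v ∧ G.adj G.v t ∧ ¬ G.adj s t := by
  constructor
  · rintro ⟨⟨hl, hmin⟩, hv⟩
    rcases G.isDirPath_iff.1 hl with ⟨rfl, -⟩ | ⟨rfl, -⟩ | ⟨rfl, hs, ht⟩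
    · simp [ListInterior] at hv
    · simp [ListInterior] at hv
    · refine ⟨rfl, hs, ht, fun hst => ?_⟩
      simpa using hmin _ (G.isDirPath_iff.2 (Or.inr (Or.inl ⟨rfl, hst⟩)))
  · rintro ⟨rfl, hs, ht, hst⟩
    refine ⟨(isShortestDirPath_iff_of_unique ?_ _).2 rfl, by simp [ListInterior]⟩
    exact fun l => G.isDirPath_iff_eq_of_not_adj hs ht hst

open scoped Classical in
theorem numShortestThrough_div_numShortest (s t : V) :
    (numShortestThrough G.adj s t G.v : ℝ) / numShortest G.adj s t =
      if G.adj s G.v ∧ G.adj G.v t ∧ ¬ G.adj s t then 1 else 0 := by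
  split_ifs with h
  · obtain ⟨hs, ht, hst⟩ := h
    have hσ : {l | IsShortestDirPath G.adj s t l} = {[s, G.v, t]} :=
      Set.ext (isShortestDirPath_iff_of_unique fun _ => G.isDirPath_iff_eq_of_not_adj hs ht hst)
    have hσv : {l | IsShortestDirPath G.adj s t l ∧ ListInterior l G.v} = {[s, G.v, t]} :=
      Set.ext fun l => G.isShortestDirPath_and_interior_v_iff.trans (by simp [hs, ht, hst])
    simp [numShortest, numShortestThrough, hσ, hσv]
  · simp [numShortestThrough, G.isShortestDirPath_and_interior_v_iff, h]

theorem degout_of_mem_I {i : V} (hi : i ∈ G.I) : G.degout i = 1 := by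
  simp [degout, G.I_out i hi]

open scoped Classical in
theorem degout_eq_card_filter_adj_T_add_one {s : V} (hs : s ∈ G.I ∨ s ∈ G.J) :
    G.degout s = #{t ∈ G.T | G.adj s t} + 1 := by
  have hout : {w | G.adj s w} = ↑(insert G.v {t ∈ G.T | G.adj s t}) := by
    ext w
    simp only [Set.mem_ofPred_eq, coe_insert, coe_filter, Set.mem_insert_iff]
    refine ⟨fun h => (G.eq_v_or_mem_T_of_adj_s8 h).imp_right fun hw => ⟨hw, h⟩, ?_⟩
    rintro (rfl | ⟨-, h⟩)
    exacts [G.adj_v_iff.2 hs, h]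
  rw [degout, hout, Set.ncard_coe_finset, card_insert_of_notMem]
  exact fun h => G.v_not_T (mem_filter.1 h).1

open scoped Classical in
theorem card_filter_not_adj_T {s : V} (hs : s ∈ G.I ∨ s ∈ G.J) :
    (#{t ∈ G.T | ¬ G.adj s t} : ℝ) = G.degout G.v - (G.degout s - 1) := by
  have hT : G.degout G.v = #G.T := by simp [degout, G.v_out]
  have := card_filter_add_card_filter_not (s := G.T) (G.adj s)
  rw [hT, G.degout_eq_card_filter_adj_T_add_one hs, ← this]
  push_cast
  ring

section Betweenness

variable [Fintype V] [DecidableEq V]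

open scoped Classical in
theorem B_eq_sum_card_filter_not_adj_T :
    G.B = ∑ s ∈ G.I ∪ G.J, (#{t ∈ G.T | ¬ G.adj s t} : ℝ) := by
  simp only [B, numShortestThrough_div_numShortest, adj_v_iff, v_out]
  have hIJ : G.I ∪ G.J ⊆ univ.erase G.v := fun s hs =>
    mem_erase.2 ⟨fun h => (mem_union.1 (h ▸ hs)).elim G.v_not_I G.v_not_J, mem_univ s⟩
  have hT : G.T ⊆ univ.erase G.v := fun t ht =>
    mem_erase.2 ⟨fun h => G.v_not_T (h ▸ ht), mem_univ t⟩
  simp only [ite_and, ← mem_union, sum_ite_irrel, sum_const_zero, sum_ite_mem,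
    inter_eq_right.2 hIJ, inter_eq_right.2 hT, sum_boole]

theorem B_eq_degout_mul_degin_sub :
    G.B = G.degout G.v * G.degin - ∑ j ∈ G.J, ((G.degout j : ℝ) - 1) := by
  have hI : ∑ i ∈ G.I, ((G.degout i : ℝ) - 1) = 0 :=
    sum_eq_zero fun i hi => by simp [G.degout_of_mem_I hi]
  rw [B_eq_sum_card_filter_not_adj_T,
    sum_congr rfl fun s hs => G.card_filter_not_adj_T (mem_union.1 hs), sum_sub_distrib,
    sum_const, card_union_of_disjoint G.disj_IJ, sum_union G.disj_IJ, hI, degin]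
  push_cast
  ring

end Betweenness

end CDGraph

theorem cd_normalized_betweenness_formula_general [Fintype V] [DecidableEq V] (G : CDGraph V)
    (h1 : 1 ≤ G.degout G.v) :
    G.B / ((G.degout G.v : ℝ) * ((G.degin : ℝ) + (G.K.card : ℝ)))
      = (G.degin : ℝ) / ((G.degin : ℝ) + (G.K.card : ℝ))
        - (∑ j ∈ G.J, ((G.degout j : ℝ) - 1))
            / ((G.degout G.v : ℝ) * ((G.degin : ℝ) + (G.K.card : ℝ))) := by
  have hd : (G.degout G.v : ℝ) ≠ 0 := Nat.cast_ne_zero.2 (by omega)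
  rw [G.B_eq_degout_mul_degin_sub, sub_div, mul_div_mul_left _ _ hd]

/-- In a CD neighborhood graph with `degout(v) ≥ 1` and
`degin(v) + n_K ≥ 1`, the normalized betweenness
`B^CD(v) = B(v)/(degout(v)·(degin(v) + n_K))` satisfies
`B^CD(v) = degin(v)/(degin(v) + n_K)
  − (Σ_{j ∈ J} (degout(j) − 1)) / (degout(v)·(degin(v) + n_K))`. -/
theorem cd_normalized_betweenness_formula [Fintype V] [DecidableEq V] (G : CDGraph V)
    (h1 : 1 ≤ G.degout G.v) (h2 : 1 ≤ G.degin + G.K.card) :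
    G.B / ((G.degout G.v : ℝ) * ((G.degin : ℝ) + (G.K.card : ℝ)))
      = (G.degin : ℝ) / ((G.degin : ℝ) + (G.K.card : ℝ))
        - (∑ j ∈ G.J, ((G.degout j : ℝ) - 1))
            / ((G.degout G.v : ℝ) * ((G.degin : ℝ) + (G.K.card : ℝ))) :=
  cd_normalized_betweenness_formula_general G h1
end
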